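/- Let P(z) = ∑_{j=0}^m a_j z^{m-j} be a polynomial with complex coefficients, η a nonzero complex number, and n ≤ m a positive integer. Fix an n-th root η^{1/n} of η. Then z^n - η divides P(z) if and only if for every r ∈ {0, 1, ..., n-1}, ∑_{j ≡ r (mod n)} a_j η^{-j/n} = 0, where η^{-j/n} denotes (η^{1/n})^{-j}. -/

import Mathlib

open Polynomial Finset

/-!
Substituting `z = ρ w` turns `z ^ n - η` into `η (w ^ n - 1)` and `P (ρ w)` into
`ρ ^ m ∑ a_j ρ⁻¹ ^ j w ^ (m - j)`. Modulo `w ^ n - 1` each power `w ^ k` reduces to `w ^ (k % n)`,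
so `w ^ n - 1` divides `∑ c_k w ^ (f k)` iff the reduced polynomial, of degree `< n`, vanishes,
i.e. iff every residue-class sum `∑_{f k ≡ r} c_k` is zero. As `j` runs through a residue class
mod `n`, so does `m - j`, which turns the classes of the exponents `m - j` into those of `j`.
-/

theorem pow_sub_one_dvd_pow_sub_pow_mod {R : Type*} [CommRing R] (x : R) (n k : ℕ) :
    x ^ n - 1 ∣ x ^ k - x ^ (k % n) := by
  have hsplit : x ^ k - x ^ (k % n) = x ^ (k % n) * (x ^ (n * (k / n)) - 1) := by
    rw [mul_sub, mul_one, ← pow_add, Nat.mod_add_div]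
  rw [hsplit]
  exact (pow_one_sub_dvd_pow_mul_sub_one x n _).mul_left _

theorem coeff_sum_C_mul_X_pow {R ι : Type*} [Semiring R] (s : Finset ι) (c : ι → R) (f : ι → ℕ)
    (r : ℕ) : (∑ k ∈ s, C (c k) * X ^ f k).coeff r = ∑ k ∈ s with f k = r, c k := by
  simp only [finsetSum_coeff, coeff_C_mul_X_pow, sum_filter, eq_comm]

theorem X_pow_sub_one_dvd_sum_C_mul_X_pow_iff {R ι : Type*} [CommRing R] [Nontrivial R]
    {n : ℕ} (hn : 0 < n) (s : Finset ι) (c : ι → R) (f : ι → ℕ) :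
    (X ^ n - 1 : R[X]) ∣ ∑ k ∈ s, C (c k) * X ^ f k ↔
      ∀ r < n, ∑ k ∈ s with f k % n = r, c k = 0 := by
  set q : R[X] := ∑ k ∈ s, C (c k) * X ^ (f k % n)
  have hmonic : (X ^ n - 1 : R[X]).Monic := by
    simpa using monic_X_pow_sub_C (1 : R) hn.ne'
  have hcongr : (X ^ n - 1 : R[X]) ∣ ∑ k ∈ s, C (c k) * X ^ f k - q := by
    rw [← sum_sub_distrib]
    refine dvd_sum fun k _ ↦ ?_
    rw [← mul_sub]
    exact (pow_sub_one_dvd_pow_sub_pow_mod X n (f k)).mul_left _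
  have hdeg : q.degree < (X ^ n - 1 : R[X]).degree := by
    rw [← C_1, degree_X_pow_sub_C hn]
    refine (degree_sum_le _ _).trans_lt ((Finset.sup_lt_iff (WithBot.bot_lt_coe n)).2 ?_)
    intro k _
    exact (degree_C_mul_X_pow_le _ _).trans_lt (WithBot.coe_lt_coe.2 (Nat.mod_lt _ hn))
  rw [dvd_iff_dvd_of_dvd_sub hcongr, ← modByMonic_eq_zero_iff_dvd hmonic,
    (modByMonic_eq_self_iff hmonic).2 hdeg, Polynomial.ext_iff]
  simp only [q, coeff_sum_C_mul_X_pow, coeff_zero]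
  refine ⟨fun h r _ ↦ h r, fun h r ↦ ?_⟩
  by_cases hr : r < n
  · exact h r hr
  · exact sum_eq_zero fun k hk ↦ absurd ((mem_filter.1 hk).2 ▸ Nat.mod_lt (f k) hn) hr

theorem forall_sum_filter_mod_eq_zero_iff_zmod {ι M : Type*} [AddCommMonoid M] {n : ℕ} [NeZero n]
    (s : Finset ι) (g : ι → ℕ) (c : ι → M) :
    (∀ r < n, ∑ k ∈ s with g k % n = r, c k = 0) ↔
      ∀ t : ZMod n, ∑ k ∈ s with (g k : ZMod n) = t, c k = 0 := by
  have hval : ∀ k (t : ZMod n), (g k : ZMod n) = t ↔ g k % n = t.val := by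
    intro k t
    rw [← ZMod.val_natCast, (ZMod.val_injective n).eq_iff]
  simp only [hval]
  refine ⟨fun h t ↦ h t.val t.val_lt, fun h r hr ↦ ?_⟩
  simpa [ZMod.val_natCast, Nat.mod_eq_of_lt hr] using h r

theorem forall_sum_filter_natCast_sub_eq_zero_iff {M : Type*} [AddCommMonoid M] {n : ℕ} (m : ℕ)
    (c : ℕ → M) :
    (∀ t : ZMod n, ∑ j ∈ range (m + 1) with ((m - j : ℕ) : ZMod n) = t, c j = 0) ↔
      ∀ t : ZMod n, ∑ j ∈ range (m + 1) with ((j : ℕ) : ZMod n) = t, c j = 0 := by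
  have hfilter : ∀ t : ZMod n, (range (m + 1)).filter (fun j ↦ ((m - j : ℕ) : ZMod n) = t) =
      (range (m + 1)).filter (fun j : ℕ ↦ (j : ZMod n) = m - t) := by
    refine fun t ↦ filter_congr fun j hj ↦ ?_
    rw [Nat.cast_sub (mem_range_succ_iff.1 hj), sub_eq_iff_eq_add', eq_sub_iff_add_eq', add_comm,
      eq_comm]
  simp only [hfilter]
  exact ⟨fun h t ↦ by simpa using h (m - t), fun h t ↦ h _⟩

theorem X_pow_sub_C_pow_dvd_iff_X_pow_sub_one_dvd_comp {R : Type*} [CommRing R] {ρ : R}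
    [Invertible ρ] (n : ℕ) (p : R[X]) :
    X ^ n - C (ρ ^ n) ∣ p ↔ X ^ n - 1 ∣ p.comp (C ρ * X) := by
  have hunit : IsUnit (C (⅟ρ ^ n)) := isUnit_C.2 ((isUnit_of_invertible _).pow n)
  have hcomp : (X ^ n - 1 : R[X]).comp (C ⅟ρ * (X - C 0)) =
      C (⅟ρ ^ n) * (X ^ n - C (ρ ^ n)) := by
    rw [C_0, sub_zero, sub_comp, pow_comp, X_comp, one_comp, mul_pow, mul_sub, ← C_pow, ← C_mul,
      ← mul_pow, invOf_mul_self, one_pow, C_1]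
  calc X ^ n - C (ρ ^ n) ∣ p ↔ C (⅟ρ ^ n) * (X ^ n - C (ρ ^ n)) ∣ p := hunit.mul_left_dvd.symm
    _ ↔ X ^ n - 1 ∣ p.comp (C ρ * X + C 0) := by
      rw [← hcomp, dvd_comp_C_mul_X_add_C_iff]
    _ ↔ X ^ n - 1 ∣ p.comp (C ρ * X) := by rw [C_0, add_zero]

theorem sum_C_mul_X_pow_sub_comp_C_mul_X {K : Type*} [Field K] {ρ : K} (hρ : ρ ≠ 0) (m : ℕ)
    (a : ℕ → K) :
    (∑ j ∈ range (m + 1), C (a j) * X ^ (m - j)).comp (C ρ * X) =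
      C (ρ ^ m) * ∑ j ∈ range (m + 1), C (a j * ρ⁻¹ ^ j) * X ^ (m - j) := by
  rw [Polynomial.sum_comp, mul_sum]
  refine sum_congr rfl fun j hj ↦ ?_
  rw [mul_comp, C_comp, pow_comp, X_comp, mul_pow, ← C_pow, pow_sub₀ _ hρ (mem_range_succ_iff.1 hj),
    inv_pow, C_mul, C_mul]
  ring

theorem divisibility_by_xn_sub_eta (m n : ℕ) (a : ℕ → ℂ) (η ρ : ℂ)
    (hη : η ≠ 0) (hρ : ρ ^ n = η) (hn : 1 ≤ n) :
    (X ^ n - C η : Polynomial ℂ) ∣ ∑ j ∈ Finset.range (m + 1), C (a j) * X ^ (m - j) ↔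
      ∀ r < n, ∑ j ∈ (Finset.range (m + 1)).filter (fun j => j % n = r),
        a j * ρ⁻¹ ^ j = 0 := by
  have : NeZero n := ⟨by omega⟩
  have hρ0 : ρ ≠ 0 := by
    rintro rfl
    exact hη (by rw [← hρ, zero_pow (NeZero.ne n)])
  have : Invertible ρ := invertibleOfNonzero hρ0
  rw [← hρ, X_pow_sub_C_pow_dvd_iff_X_pow_sub_one_dvd_comp, sum_C_mul_X_pow_sub_comp_C_mul_X hρ0,
    (isUnit_C.2 (hρ0.isUnit.pow m)).dvd_mul_left, X_pow_sub_one_dvd_sum_C_mul_X_pow_iff hn,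
    forall_sum_filter_mod_eq_zero_iff_zmod, forall_sum_filter_natCast_sub_eq_zero_iff,
    ← forall_sum_filter_mod_eq_zero_iff_zmod]
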